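/- Every finite connected simple graph G has a tree-cut decomposition 𝒯 = (T, 𝒳) with w(𝒯) = scw(G) such that every leaf node of T has a nonempty bag and, if T has at least one edge, the number of nodes of T with empty bags is at most m − 2, where m is the number of leaf nodes of T. -/

import Mathlib

open SimpleGraph

universe u

variable {V : Type u}

/-- A tree-cut decomposition of a finite simple graph `G`: a finite tree `T`
on a node type `B`, together with pairwise disjoint (possibly empty) bags
`bag b ⊆ V` whose union is all of `V`. -/
structure TreeCutDecomp [Finite V] (G : SimpleGraph V) where
  B : Type
  finB : Finite B
  T : SimpleGraph B
  isTree : T.IsTree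
  bag : B → Set V
  disj : Pairwise fun b d => Disjoint (bag b) (bag d)
  covers : ∀ v : V, ∃ b, v ∈ bag b

namespace TreeCutDecomp

variable [Finite V] {G : SimpleGraph V}

/-- The adhesion of a link `l` of `T`: the set of edges of `G` whose endpoints lie in
bags indexed by nodes in different components of `T - l` (equivalently, nodes such that
every walk between them uses `l`). -/
def linkAdh (D : TreeCutDecomp G) (l : Sym2 D.B) : Set (Sym2 V) :=
  {e | e ∈ G.edgeSet ∧ ∃ v w : V, ∃ b d : D.B, e = s(v, w) ∧ v ∈ D.bag b ∧ w ∈ D.bag d ∧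
    ∀ p : D.T.Walk b d, l ∈ p.edges}

/-- The adhesion of a node `n` of `T`: the set of edges of `G` whose endpoints lie in
bags indexed by nodes in different components of `T - n` (equivalently, nodes distinct
from `n` such that every walk between them passes through `n`). -/
def nodeAdh (D : TreeCutDecomp G) (n : D.B) : Set (Sym2 V) :=
  {e | e ∈ G.edgeSet ∧ ∃ v w : V, ∃ b d : D.B, e = s(v, w) ∧ v ∈ D.bag b ∧ w ∈ D.bag d ∧
    b ≠ n ∧ d ≠ n ∧ ∀ p : D.T.Walk b d, n ∈ p.support}

/-- The width of a tree-cut decomposition: the maximum of `|adh(l)|` over links `l` of `T`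
and of `|X_b| + |adh(b)|` over nodes `b` of `T`. -/
noncomputable def width (D : TreeCutDecomp G) : ℕ :=
  sSup ({n | ∃ l ∈ D.T.edgeSet, n = (D.linkAdh l).ncard} ∪
        {n | ∃ b : D.B, n = (D.bag b).ncard + (D.nodeAdh b).ncard})

end TreeCutDecomp

/-- The screewidth of `G`: the minimum width of a tree-cut decomposition of `G`. -/
noncomputable def screewidth [Finite V] (G : SimpleGraph V) : ℕ :=
  sInf {n | ∃ D : TreeCutDecomp G, D.width = n}


namespace ScwAux

variable {B : Type} (T : SimpleGraph B) (n : B)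

/-- Suppress node `n` in graph `T`: remove it, and join any two distinct neighbors of `n`. -/
def contractAt : SimpleGraph {b : B // b ≠ n} where
  Adj b c := T.Adj ↑b ↑c ∨ (T.Adj ↑b n ∧ T.Adj n ↑c ∧ b ≠ c)
  symm := by
    refine ⟨?_⟩; rintro b c (h | ⟨h1, h2, h3⟩)
    · exact Or.inl h.symm
    · exact Or.inr ⟨h2.symm, h1.symm, h3.symm⟩
  loopless := by
    refine ⟨?_⟩; rintro b (h | ⟨h1, h2, h3⟩)
    · exact T.loopless.irrefl _ h
    · exact h3 rfl

variable {T n}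

lemma tree_no_triangle (hac : T.IsAcyclic) {a b c : B}
    (hab : T.Adj a b) (hbc : T.Adj b c) (hca : T.Adj a c) : False := by
  have hbr := (isAcyclic_iff_forall_adj_isBridge.mp hac) hca
  rw [isBridge_iff_adj_and_forall_walk_mem_edges] at hbr
  have hmem := hbr (Walk.cons hab (Walk.cons hbc Walk.nil))
  simp only [Walk.edges_cons, Walk.edges_nil, List.mem_cons, List.not_mem_nil, or_false]
    at hmem
  rcases hmem with h | h
  · rw [Sym2.eq_iff] at h
    rcases h with ⟨-, h2⟩ | ⟨h1, -⟩
    · exact hbc.ne' h2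
    · exact hab.ne h1
  · rw [Sym2.eq_iff] at h
    rcases h with ⟨h1, -⟩ | ⟨h1, -⟩
    · exact hab.ne h1
    · exact hca.ne h1

lemma transform : ∀ (k : ℕ) {x y : B} (p : T.Walk x y), p.length ≤ k →
    ∀ (hx : x ≠ n) (hy : y ≠ n),
    ∃ p' : (contractAt T n).Walk ⟨x, hx⟩ ⟨y, hy⟩,
      (∀ z, z ∈ p'.support → (z : B) ∈ p.support) ∧
      (∀ e, e ∈ p'.edges →
        Sym2.map Subtype.val e ∈ p.edges ∨
        ∃ b c : {b : B // b ≠ n}, e = s(b, c) ∧ s((b : B), n) ∈ p.edges ∧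
          s(n, (c : B)) ∈ p.edges) := by
  intro k
  induction k with
  | zero =>
    intro x y p hp hx hy
    cases p with
    | nil =>
      refine ⟨Walk.nil, ?_, ?_⟩
      · intro z hz
        simp only [Walk.support_nil, List.mem_singleton] at hz ⊢
        rw [hz]
      · intro e he
        simp at he
    | cons h q =>
      exact absurd hp (by simp [Walk.length_cons])
  | succ k ih =>
    intro x y p hp hx hy
    cases p with
    | nil =>
      refine ⟨Walk.nil, ?_, ?_⟩
      · intro z hz
        simp only [Walk.support_nil, List.mem_singleton] at hz ⊢
        rw [hz]
      · intro e he
        simp at he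
    | @cons _ w _ h q =>
      by_cases hw : w = n
      · subst w
        cases q with
        | nil => exact absurd rfl hy
        | @cons _ w2 _ h2 q2 =>
          have hw2 : w2 ≠ n := h2.ne'
          have hlen : q2.length ≤ k := by
            simp only [Walk.length_cons] at hp
            omega
          by_cases hxw : x = w2
          · subst hxw
            obtain ⟨q', hsup, hedg⟩ := ih q2 hlen hx hy
            refine ⟨q', ?_, ?_⟩
            · intro z hz
              have := hsup z hz
              rw [Walk.support_cons, Walk.support_cons]
              exact List.mem_cons_of_mem _ (List.mem_cons_of_mem _ this)
            · intro e he
              rcases hedg e he with h' | ⟨b, c, hbc, h1, h2'⟩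
              · exact Or.inl (List.mem_cons_of_mem _ (List.mem_cons_of_mem _ h'))
              · exact Or.inr ⟨b, c, hbc,
                  List.mem_cons_of_mem _ (List.mem_cons_of_mem _ h1),
                  List.mem_cons_of_mem _ (List.mem_cons_of_mem _ h2')⟩
          · obtain ⟨q', hsup, hedg⟩ := ih q2 hlen hw2 hy
            have hadj : (contractAt T n).Adj ⟨x, hx⟩ ⟨w2, hw2⟩ :=
              Or.inr ⟨h, h2, fun hh => hxw (congrArg Subtype.val hh)⟩
            refine ⟨Walk.cons hadj q', ?_, ?_⟩
            · intro z hz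
              rw [Walk.support_cons, List.mem_cons] at hz
              rcases hz with rfl | hz
              · exact Walk.start_mem_support _
              · have := hsup z hz
                rw [Walk.support_cons, Walk.support_cons]
                exact List.mem_cons_of_mem _ (List.mem_cons_of_mem _ this)
            · intro e he
              rw [Walk.edges_cons, List.mem_cons] at he
              rcases he with rfl | he
              · exact Or.inr ⟨⟨x, hx⟩, ⟨w2, hw2⟩, rfl,
                  List.mem_cons_self,
                  List.mem_cons_of_mem _ (List.mem_cons_self)⟩
              · rcases hedg e he with h' | ⟨b, c, hbc, h1, h2'⟩
                · exact Or.inl (List.mem_cons_of_mem _ (List.mem_cons_of_mem _ h'))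
                · exact Or.inr ⟨b, c, hbc,
                    List.mem_cons_of_mem _ (List.mem_cons_of_mem _ h1),
                    List.mem_cons_of_mem _ (List.mem_cons_of_mem _ h2')⟩
      · have hlen : q.length ≤ k := by
          simp only [Walk.length_cons] at hp
          omega
        obtain ⟨q', hsup, hedg⟩ := ih q hlen hw hy
        refine ⟨Walk.cons (show (contractAt T n).Adj ⟨x, hx⟩ ⟨w, hw⟩ from Or.inl h) q', ?_, ?_⟩
        · intro z hz
          rw [Walk.support_cons, List.mem_cons] at hz
          rcases hz with rfl | hz
          · exact Walk.start_mem_support _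
          · exact List.mem_cons_of_mem _ (hsup z hz)
        · intro e he
          rw [Walk.edges_cons, List.mem_cons] at he
          rcases he with rfl | he
          · exact Or.inl (by rw [Sym2.map_pair_eq]; exact List.mem_cons_self)
          · rcases hedg e he with h' | ⟨b, c, hbc, h1, h2'⟩
            · exact Or.inl (List.mem_cons_of_mem _ h')
            · exact Or.inr ⟨b, c, hbc, List.mem_cons_of_mem _ h1, List.mem_cons_of_mem _ h2'⟩


lemma expand : ∀ {x y : {b : B // b ≠ n}} (p' : (contractAt T n).Walk x y),
    ∃ p : T.Walk ↑x ↑y,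
      ∀ e, e ∈ p.edges →
        (∃ f ∈ p'.edges, e = Sym2.map Subtype.val f) ∨
        (∃ b c : {b : B // b ≠ n}, s(b, c) ∈ p'.edges ∧ ¬ T.Adj ↑b ↑c ∧
          (e = s((b : B), n) ∨ e = s(n, (c : B)))) := by
  intro x y p'
  induction p' with
  | nil => exact ⟨Walk.nil, by simp⟩
  | @cons a b c h q' ih =>
    obtain ⟨q, hq⟩ := ih
    by_cases hT : T.Adj ↑a ↑b
    · refine ⟨Walk.cons hT q, ?_⟩
      intro e he
      rw [Walk.edges_cons, List.mem_cons] at he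
      rcases he with rfl | he
      · exact Or.inl ⟨s(a, b), List.mem_cons_self, by rw [Sym2.map_pair_eq]⟩
      · rcases hq e he with ⟨f, hf, hef⟩ | ⟨b0, c0, hbc, hna, hor⟩
        · exact Or.inl ⟨f, List.mem_cons_of_mem _ hf, hef⟩
        · exact Or.inr ⟨b0, c0, List.mem_cons_of_mem _ hbc, hna, hor⟩
    · have h' : T.Adj ↑a n ∧ T.Adj n ↑b ∧ a ≠ b := by
        rcases h with h | h
        · exact absurd h hT
        · exact h
      refine ⟨Walk.cons h'.1 (Walk.cons h'.2.1 q), ?_⟩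
      intro e he
      rw [Walk.edges_cons, List.mem_cons, Walk.edges_cons, List.mem_cons] at he
      rcases he with rfl | rfl | he
      · exact Or.inr ⟨a, b, List.mem_cons_self, hT, Or.inl rfl⟩
      · exact Or.inr ⟨a, b, List.mem_cons_self, hT, Or.inr rfl⟩
      · rcases hq e he with ⟨f, hf, hef⟩ | ⟨b0, c0, hbc, hna, hor⟩
        · exact Or.inl ⟨f, List.mem_cons_of_mem _ hf, hef⟩
        · exact Or.inr ⟨b0, c0, List.mem_cons_of_mem _ hbc, hna, hor⟩

lemma eq_or_eq_of_ncard_le_two {α : Type*} {s : Set α} (hfin : s.Finite) (h2 : s.ncard ≤ 2)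
    {x y z : α} (hx : x ∈ s) (hy : y ∈ s) (hxy : x ≠ y) (hz : z ∈ s) : z = x ∨ z = y := by
  by_contra hc
  push_neg at hc
  have hsub : ({z, x, y} : Set α) ⊆ s := by
    intro a ha
    simp only [Set.mem_insert_iff, Set.mem_singleton_iff] at ha
    rcases ha with rfl | rfl | rfl <;> assumption
  have h3 : ({z, x, y} : Set α).ncard = 3 := by
    rw [Set.ncard_insert_of_notMem (by simp [hc.1, hc.2]) (Set.toFinite _),
      Set.ncard_pair hxy]
  have := Set.ncard_le_ncard hsub hfin
  omega

lemma contractAt_isTree [Finite B] (hT : T.IsTree)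
    (hdeg : ({c | T.Adj n c}).ncard ≤ 2)
    (hne : Nonempty {b : B // b ≠ n}) : (contractAt T n).IsTree := by
  have hbr : ∀ (a b : B), T.Adj a b → ∀ p : T.Walk a b, s(a, b) ∈ p.edges := fun a b hab =>
    ((isBridge_iff_adj_and_forall_walk_mem_edges.mp
      ((isAcyclic_iff_forall_adj_isBridge.mp hT.IsAcyclic) hab)))
  constructor
  · rw [connected_iff]
    refine ⟨?_, hne⟩
    rintro ⟨x, hx⟩ ⟨y, hy⟩
    obtain ⟨p⟩ := hT.isConnected.preconnected x y
    obtain ⟨p', -, -⟩ := transform p.length p le_rfl hx hy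
    exact ⟨p'⟩
  · rw [isAcyclic_iff_forall_adj_isBridge]
    intro x y hxy
    rw [isBridge_iff_adj_and_forall_walk_mem_edges]
    refine fun p' => ?_
    by_contra he
    obtain ⟨P, hP⟩ := expand p'
    by_cases hA : T.Adj ↑x ↑y
    · have hmem := hbr _ _ hA P
      rcases hP _ hmem with ⟨f, hf, hef⟩ | ⟨b0, c0, hbc, hna, hor⟩
      · induction f using Sym2.ind with
        | _ a b =>
          rw [Sym2.map_pair_eq, Sym2.eq_iff] at hef
          rcases hef with ⟨h1, h2⟩ | ⟨h1, h2⟩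
          · rw [show s(x, y) = s(a, b) from by
              rw [Sym2.eq_iff]; exact Or.inl ⟨Subtype.ext h1, Subtype.ext h2⟩] at he
            exact he hf
          · rw [show s(x, y) = s(a, b) from by
              rw [Sym2.eq_iff]; exact Or.inr ⟨Subtype.ext h1, Subtype.ext h2⟩] at he
            exact he hf
      · have hn : n ∈ s((x : B), (y : B)) := by
          rcases hor with hor | hor <;> rw [hor] <;> simp
        rw [Sym2.mem_iff] at hn
        rcases hn with hn | hn
        · exact x.2 hn.symm
        · exact y.2 hn.symm
    · rcases hxy with h3 | ⟨h1, h2, hxyne⟩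
      · exact hA h3
      · have hxyv : (x : B) ≠ (y : B) := fun hh => hxyne (Subtype.ext hh)
        have hpig : ∀ z, T.Adj n z → z = ↑x ∨ z = ↑y := fun z hz =>
          eq_or_eq_of_ncard_le_two (Set.toFinite _) hdeg h1.symm h2 hxyv hz
        have hmem := hbr _ _ h1 (P.concat h2.symm)
        rw [Walk.edges_concat, List.concat_eq_append, List.mem_append,
          List.mem_singleton] at hmem
        rcases hmem with hmem | hmem
        · rcases hP _ hmem with ⟨f, hf, hef⟩ | ⟨b0, c0, hbc, hna, hor⟩
          · have : n ∈ Sym2.map Subtype.val f := by rw [← hef]; simp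
            rw [Sym2.mem_map] at this
            obtain ⟨z, -, hz⟩ := this
            exact z.2 hz
          · have hadj : (contractAt T n).Adj b0 c0 :=
              (contractAt T n).mem_edgeSet.mp (p'.edges_subset_edgeSet hbc)
            rcases hadj with hadj | ⟨hb1, hc1, hbcne⟩
            · exact hna hadj
            · have hb0 := hpig _ hb1.symm
              have hc0 := hpig _ hc1
              have hbcv : (b0 : B) ≠ (c0 : B) := fun hh => hbcne (Subtype.ext hh)
              rcases hb0 with hb0 | hb0 <;> rcases hc0 with hc0 | hc0
              · exact hbcv (hb0.trans hc0.symm)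
              · rw [show s(x, y) = s(b0, c0) from by
                  rw [Sym2.eq_iff]
                  exact Or.inl ⟨Subtype.ext hb0.symm, Subtype.ext hc0.symm⟩] at he
                exact he hbc
              · rw [show s(x, y) = s(b0, c0) from by
                  rw [Sym2.eq_iff]
                  exact Or.inr ⟨Subtype.ext hc0.symm, Subtype.ext hb0.symm⟩] at he
                exact he hbc
              · exact hbcv (hb0.trans hc0.symm)
        · rw [Sym2.eq_iff] at hmem
          rcases hmem with ⟨h1', -⟩ | ⟨h1', h2'⟩
          · exact hxyv h1'
          · exact x.2 h1'


lemma tree_deg3_le_leaves {B : Type} [Finite B] {T : SimpleGraph B} (hT : T.IsTree)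
    (hE : T.edgeSet.Nonempty) :
    ({b : B | 3 ≤ ({c | T.Adj b c}).ncard}).ncard + 2 ≤
      ({b : B | ({c | T.Adj b c}).ncard = 1}).ncard := by
  classical
  haveI : Fintype B := Fintype.ofFinite B
  have hdegeq : ∀ b : B, ({c | T.Adj b c}).ncard = T.degree b := by
    intro b
    have hset : {c | T.Adj b c} = ↑(T.neighborFinset b) := by
      ext c
      simp [SimpleGraph.mem_neighborFinset]
    rw [hset, Set.ncard_coe_finset]
    rfl
  have hdpos : ∀ b : B, 1 ≤ T.degree b := by
    intro b
    rw [Nat.one_le_iff_ne_zero, ← Nat.pos_iff_ne_zero, T.degree_pos_iff_exists_adj]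
    obtain ⟨e, heE⟩ := hE
    induction e using Sym2.ind with
    | _ u w =>
      have huw : T.Adj u w := heE
      rcases eq_or_ne b u with rfl | hbu
      · exact ⟨w, huw⟩
      · obtain ⟨p⟩ := hT.isConnected.preconnected b u
        cases p with
        | nil => exact absurd rfl hbu
        | cons h q => exact ⟨_, h⟩
  have hcard := hT.card_edgeFinset
  have hsum := T.sum_degrees_eq_twice_card_edges
  set l := (Finset.univ.filter (fun b : B => T.degree b = 1)).card with hl
  set t := (Finset.univ.filter (fun b : B => 3 ≤ T.degree b)).card with ht
  have key : (t : ℤ) + 2 ≤ (l : ℤ) := by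
    have hle : ∀ b ∈ (Finset.univ : Finset B),
        (2 : ℤ) + (if 3 ≤ T.degree b then 1 else 0)
          - (if T.degree b = 1 then 1 else 0) ≤ (T.degree b : ℤ) := by
      intro b _
      have := hdpos b
      split_ifs with h1 h2 <;> push_cast <;> omega
    have hs := Finset.sum_le_sum hle
    rw [Finset.sum_sub_distrib, Finset.sum_add_distrib, Finset.sum_const,
      Finset.sum_boole, Finset.sum_boole] at hs
    have hcast : ∑ b : B, (T.degree b : ℤ) = ((∑ b : B, T.degree b : ℕ) : ℤ) := by
      push_cast
      rfl
    rw [hcast, hsum] at hs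
    simp only [Finset.card_univ, nsmul_eq_mul, smul_eq_mul] at hs
    rw [← hl, ← ht] at hs
    have hB1 : 1 ≤ Fintype.card B := by
      have := Fintype.card_pos_iff.mpr (by
        obtain ⟨e, heE⟩ := hE
        induction e using Sym2.ind with
        | _ u w => exact ⟨u⟩)
      omega
    push_cast at hs
    omega
  have h1 : ({b : B | 3 ≤ ({c | T.Adj b c}).ncard}).ncard = t := by
    have hset : {b : B | 3 ≤ ({c | T.Adj b c}).ncard}
        = ↑(Finset.univ.filter (fun b : B => 3 ≤ T.degree b)) := by
      ext b
      simp only [Set.mem_setOf_eq, Finset.coe_filter, Finset.mem_univ, true_and, hdegeq b]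
    rw [hset, Set.ncard_coe_finset]
  have h2 : ({b : B | ({c | T.Adj b c}).ncard = 1}).ncard = l := by
    have hset : {b : B | ({c | T.Adj b c}).ncard = 1}
        = ↑(Finset.univ.filter (fun b : B => T.degree b = 1)) := by
      ext b
      simp only [Set.mem_setOf_eq, Finset.coe_filter, Finset.mem_univ, true_and, hdegeq b]
    rw [hset, Set.ncard_coe_finset]
  rw [h1, h2]
  omega

end ScwAux


namespace TreeCutDecomp

variable [Finite V] {G : SimpleGraph V}

lemma widthSet_bddAbove (D : TreeCutDecomp G) :
    BddAbove ({n | ∃ l ∈ D.T.edgeSet, n = (D.linkAdh l).ncard} ∪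
        {n | ∃ b : D.B, n = (D.bag b).ncard + (D.nodeAdh b).ncard}) := by
  haveI := D.finB
  apply Set.Finite.bddAbove
  apply Set.Finite.union
  · apply (Set.finite_range (fun l : Sym2 D.B => (D.linkAdh l).ncard)).subset
    rintro m ⟨l, hl, rfl⟩
    exact ⟨l, rfl⟩
  · apply (Set.finite_range (fun b : D.B => (D.bag b).ncard + (D.nodeAdh b).ncard)).subset
    rintro m ⟨b, rfl⟩
    exact ⟨b, rfl⟩

lemma le_width_link (D : TreeCutDecomp G) {l : Sym2 D.B} (hl : l ∈ D.T.edgeSet) :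
    (D.linkAdh l).ncard ≤ D.width :=
  le_csSup D.widthSet_bddAbove (Or.inl ⟨l, hl, rfl⟩)

lemma le_width_node (D : TreeCutDecomp G) (b : D.B) :
    (D.bag b).ncard + (D.nodeAdh b).ncard ≤ D.width :=
  le_csSup D.widthSet_bddAbove (Or.inr ⟨b, rfl⟩)

end TreeCutDecomp

/-- The one-node tree-cut decomposition. -/
noncomputable def trivialDecomp [Finite V] (G : SimpleGraph V) : TreeCutDecomp G where
  B := Unit
  finB := inferInstance
  T := ⊥
  isTree := by
    constructor
    · rw [connected_iff]
      exact ⟨fun a b => by rw [Subsingleton.elim a b], ⟨()⟩⟩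
    · simp
  bag := fun _ => Set.univ
  disj := fun a b hab => absurd (Subsingleton.elim a b) hab
  covers := fun v => ⟨(), Set.mem_univ v⟩

lemma reduce [Finite V] {G : SimpleGraph V} (D : TreeCutDecomp G) (n : D.B)
    (hbag : D.bag n = ∅) (hdeg : ({c | D.T.Adj n c}).ncard ≤ 2)
    (hex : ∃ m : D.B, m ≠ n) :
    ∃ D' : TreeCutDecomp G, D'.width ≤ D.width ∧ Nat.card D'.B < Nat.card D.B := by
  classical
  haveI := D.finB
  obtain ⟨m0, hm0⟩ := hex
  have hne : Nonempty {b : D.B // b ≠ n} := ⟨⟨m0, hm0⟩⟩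
  refine ⟨{ B := {b : D.B // b ≠ n}
            finB := inferInstance
            T := ScwAux.contractAt D.T n
            isTree := ScwAux.contractAt_isTree D.isTree hdeg hne
            bag := fun b => D.bag ↑b
            disj := fun b c hbc => D.disj (fun h => hbc (Subtype.ext h))
            covers := by
              intro v
              obtain ⟨b, hb⟩ := D.covers v
              have hbn : b ≠ n := fun h => by rw [h, hbag] at hb; exact hb
              exact ⟨⟨b, hbn⟩, hb⟩ }, ?_, ?_⟩
  · unfold TreeCutDecomp.width
    apply csSup_le
    · exact ⟨_, Or.inr ⟨hne.some, rfl⟩⟩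
    · rintro m (⟨l, hl, rfl⟩ | ⟨b, rfl⟩)
      · induction l using Sym2.ind with
        | _ b c =>
          have hadj : (ScwAux.contractAt D.T n).Adj b c :=
            (ScwAux.contractAt D.T n).mem_edgeSet.mp hl
          by_cases hA : D.T.Adj ↑b ↑c
          · have hsub : ∀ e, e ∈ G.edgeSet ∧ (∃ v w : V, ∃ bb dd : {b : D.B // b ≠ n},
                e = s(v, w) ∧ v ∈ D.bag ↑bb ∧ w ∈ D.bag ↑dd ∧
                ∀ p : (ScwAux.contractAt D.T n).Walk bb dd, s(b, c) ∈ p.edges) →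
                e ∈ D.linkAdh s((b : D.B), (c : D.B)) := by
              rintro e ⟨heG, v, w, bb, dd, hevw, hvb, hwd, hwalk⟩
              refine ⟨heG, v, w, ↑bb, ↑dd, hevw, hvb, hwd, ?_⟩
              intro p
              obtain ⟨p', hsup, hedg⟩ := ScwAux.transform p.length p le_rfl bb.2 dd.2
              rcases hedg _ (hwalk p') with h' | ⟨b0, c0, hbc0, h1, h2⟩
              · rwa [Sym2.map_pair_eq] at h'
              · exfalso
                have hb0 : D.T.Adj ↑b0 n := D.T.mem_edgeSet.mp (p.edges_subset_edgeSet h1)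
                have hc0 : D.T.Adj n ↑c0 := D.T.mem_edgeSet.mp (p.edges_subset_edgeSet h2)
                rw [Sym2.eq_iff] at hbc0
                rcases hbc0 with ⟨rfl, rfl⟩ | ⟨rfl, rfl⟩
                · exact ScwAux.tree_no_triangle D.isTree.IsAcyclic hb0 hc0 hA
                · exact ScwAux.tree_no_triangle D.isTree.IsAcyclic hc0.symm hb0.symm hA
            calc _ ≤ (D.linkAdh s((b : D.B), (c : D.B))).ncard :=
                  Set.ncard_le_ncard (fun e he => hsub e he) (Set.toFinite _)
              _ ≤ D.width := D.le_width_link (D.T.mem_edgeSet.mpr hA)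
          · obtain ⟨h1, h2, hbcne⟩ : D.T.Adj ↑b n ∧ D.T.Adj n ↑c ∧ b ≠ c := by
              rcases hadj with h | h
              · exact absurd h hA
              · exact h
            have hsub : ∀ e, e ∈ G.edgeSet ∧ (∃ v w : V, ∃ bb dd : {b : D.B // b ≠ n},
                e = s(v, w) ∧ v ∈ D.bag ↑bb ∧ w ∈ D.bag ↑dd ∧
                ∀ p : (ScwAux.contractAt D.T n).Walk bb dd, s(b, c) ∈ p.edges) →
                e ∈ D.linkAdh s((b : D.B), n) := by
              rintro e ⟨heG, v, w, bb, dd, hevw, hvb, hwd, hwalk⟩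
              refine ⟨heG, v, w, ↑bb, ↑dd, hevw, hvb, hwd, ?_⟩
              intro p
              obtain ⟨p', hsup, hedg⟩ := ScwAux.transform p.length p le_rfl bb.2 dd.2
              rcases hedg _ (hwalk p') with h' | ⟨b0, c0, hbc0, h1', h2'⟩
              · rw [Sym2.map_pair_eq] at h'
                exact absurd (D.T.mem_edgeSet.mp (p.edges_subset_edgeSet h')) hA
              · rw [Sym2.eq_iff] at hbc0
                rcases hbc0 with ⟨rfl, rfl⟩ | ⟨rfl, rfl⟩
                · exact h1'
                · rwa [Sym2.eq_swap]
            calc _ ≤ (D.linkAdh s((b : D.B), n)).ncard :=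
                  Set.ncard_le_ncard (fun e he => hsub e he) (Set.toFinite _)
              _ ≤ D.width := D.le_width_link (D.T.mem_edgeSet.mpr h1)
      · have hsub : {e : Sym2 V | e ∈ G.edgeSet ∧ ∃ v w : V, ∃ bb dd : {b : D.B // b ≠ n},
            e = s(v, w) ∧ v ∈ D.bag ↑bb ∧ w ∈ D.bag ↑dd ∧ bb ≠ b ∧ dd ≠ b ∧
            ∀ p : (ScwAux.contractAt D.T n).Walk bb dd, b ∈ p.support} ⊆ D.nodeAdh ↑b := by
          rintro e ⟨heG, v, w, bb, dd, hevw, hvb, hwd, hbbne, hddne, hwalk⟩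
          refine ⟨heG, v, w, ↑bb, ↑dd, hevw, hvb, hwd,
            fun h => hbbne (Subtype.ext h), fun h => hddne (Subtype.ext h), ?_⟩
          intro p
          obtain ⟨p', hsup, -⟩ := ScwAux.transform p.length p le_rfl bb.2 dd.2
          exact hsup _ (hwalk p')
        have h5 := Set.ncard_le_ncard hsub (Set.toFinite (D.nodeAdh (↑b : D.B)))
        exact (Nat.add_le_add_left h5 ((D.bag (↑b : D.B)).ncard)).trans (D.le_width_node ↑b)
  · exact Finite.card_subtype_lt (p := fun b => b ≠ n) (x := n) (by simp)

/-- Every finite connected simple graph `G` has an optimal tree-cut decomposition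
(one of width `scw(G)`) in which every leaf node has a nonempty bag and, if the tree
has at least one edge, the number of nodes with empty bags is at most `m - 2`, where
`m` is the number of leaf nodes. -/
theorem exists_optimal_decomp_leaves_nonempty [Finite V] (G : SimpleGraph V)
    (hG : G.Connected) :
    ∃ D : TreeCutDecomp G, D.width = screewidth G ∧
      (∀ b : D.B, ({c : D.B | D.T.Adj b c}).ncard = 1 → D.bag b ≠ ∅) ∧
      (D.T.edgeSet.Nonempty →
        ({b : D.B | D.bag b = ∅}).ncard ≤
          ({b : D.B | ({c : D.B | D.T.Adj b c}).ncard = 1}).ncard - 2) := by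
  classical
  have hV : Nonempty V := hG.nonempty
  have hS : {n | ∃ D : TreeCutDecomp G, D.width = n}.Nonempty :=
    ⟨(trivialDecomp G).width, trivialDecomp G, rfl⟩
  have hscw : ∃ D : TreeCutDecomp G, D.width = screewidth G := Nat.sInf_mem hS
  set M := {k | ∃ D0 : TreeCutDecomp G, D0.width = screewidth G ∧ Nat.card D0.B = k}
    with hMdef
  have hM : M.Nonempty := ⟨_, hscw.choose, hscw.choose_spec, rfl⟩
  obtain ⟨D, hD, hDcard⟩ := Nat.sInf_mem hM
  haveI := D.finB
  have key : ∀ b : D.B, D.bag b = ∅ → 3 ≤ ({c | D.T.Adj b c}).ncard := by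
    intro b hb
    by_contra hlt
    push_neg at hlt
    have hdeg : ({c | D.T.Adj b c}).ncard ≤ 2 := by omega
    have hex : ∃ m : D.B, m ≠ b := by
      by_contra hall
      push_neg at hall
      obtain ⟨v⟩ := hV
      obtain ⟨b', hb'⟩ := D.covers v
      rw [hall b', hb] at hb'
      exact hb'
    obtain ⟨D', hw', hc'⟩ := reduce D b hb hdeg hex
    have h1 : screewidth G ≤ D'.width := Nat.sInf_le ⟨D', rfl⟩
    have h2 : D'.width ≤ screewidth G := hw'.trans (le_of_eq hD)
    have hmem : Nat.card D'.B ∈ M := ⟨D', le_antisymm h2 h1, rfl⟩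
    have hle := Nat.sInf_le hmem
    omega
  refine ⟨D, hD, ?_, ?_⟩
  · intro b hb1 hbe
    have := key b hbe
    omega
  · intro hE
    have h3 := ScwAux.tree_deg3_le_leaves D.isTree hE
    have hsub : {b : D.B | D.bag b = ∅} ⊆ {b : D.B | 3 ≤ ({c | D.T.Adj b c}).ncard} :=
      fun b hb => key b hb
    have h4 := Set.ncard_le_ncard hsub (Set.toFinite _)
    omega
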